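/- arXiv:1712.09202 — 8 statements merged into one kernel-verified Lean document; each statement's English description precedes it below -/
import Mathlib

section
/- For any k ∈ ℤ and a,b ∈ ℂ, the linear map σ : W(a,b) → W(a+k,b) defined on basis elements by σ(L_m) = L_m and σ(I_m) = I_{m−k} is an isomorphism of Lie algebras. -/
/-- A model of the Lie algebra `W(a,b)`: a complex Lie algebra with a basis
`{L m, I m | m : ℤ}` satisfying the defining bracket relations. -/
structure IsWab (a b : ℂ) (W : Type*) [LieRing W] [LieAlgebra ℂ W]
    (L I : ℤ → W) : Prop where
  bracket_LL : ∀ m n : ℤ, ⁅L m, L n⁆ = ((m - n : ℤ) : ℂ) • L (m + n)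
  bracket_LI : ∀ m n : ℤ, ⁅L m, I n⁆ = (-((n : ℂ) + a + b * (m : ℂ))) • I (m + n)
  bracket_II : ∀ m n : ℤ, ⁅I m, I n⁆ = 0
  basis : ∃ B : Module.Basis (ℤ ⊕ ℤ) ℂ W,
    (∀ m : ℤ, B (Sum.inl m) = L m) ∧ (∀ m : ℤ, B (Sum.inr m) = I m)

/-! Shifting the index of `I` by `k` turns the structure constant `-(n + a + b m)` of `W(a,b)`
into `-((n - k) + (a + k) + b m)`, the same number. Hence the bijection of bases is bracket
preserving, and a linear map that preserves brackets of basis vectors is a Lie homomorphism. -/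

theorem LinearMap.map_lie_of_basis {R L L' ι : Type*} [CommRing R] [LieRing L] [LieAlgebra R L]
    [LieRing L'] [LieAlgebra R L'] (b : Module.Basis ι R L) (f : L →ₗ[R] L')
    (hb : ∀ i j, f ⁅b i, b j⁆ = ⁅f (b i), f (b j)⁆) (x y : L) :
    f ⁅x, y⁆ = ⁅f x, f y⁆ := by
  let bracket : L →ₗ[R] L →ₗ[R] L := LieModule.toEnd R L L
  let bracket' : L' →ₗ[R] L' →ₗ[R] L' := LieModule.toEnd R L' L'
  have := LinearMap.ext_basis b b (B := bracket.compr₂ f) (B' := bracket'.compl₁₂ f f)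
    (by simpa [bracket, bracket'] using hb)
  simpa [bracket, bracket'] using LinearMap.congr_fun₂ this x y

namespace IsWab

variable {a b : ℂ} {k : ℤ} {W W' : Type*} [LieRing W] [LieAlgebra ℂ W] [LieRing W']
  [LieAlgebra ℂ W'] {L I : ℤ → W} {L' I' : ℤ → W'}

theorem exists_linearEquiv_shift (h : IsWab a b W L I) (h' : IsWab (a + k) b W' L' I') :
    ∃ f : W ≃ₗ[ℂ] W', (∀ m, f (L m) = L' m) ∧ ∀ m, f (I m) = I' (m - k) := by
  obtain ⟨B, hBL, hBI⟩ := h.basis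
  obtain ⟨B', hBL', hBI'⟩ := h'.basis
  let f := B.equiv B' ((Equiv.refl ℤ).sumCongr (Equiv.subRight k))
  refine ⟨f, fun m => ?_, fun m => ?_⟩
  · rw [← hBL, B.equiv_apply, Equiv.sumCongr_apply, Sum.map_inl, hBL']
    rfl
  · rw [← hBI, B.equiv_apply, Equiv.sumCongr_apply, Sum.map_inr, hBI']
    rfl

theorem map_lie_of_shift (h : IsWab a b W L I) (h' : IsWab (a + k) b W' L' I')
    (f : W →ₗ[ℂ] W') (hL : ∀ m, f (L m) = L' m) (hI : ∀ m, f (I m) = I' (m - k))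
    (x y : W) : f ⁅x, y⁆ = ⁅f x, f y⁆ := by
  obtain ⟨B, hBL, hBI⟩ := h.basis
  have hLI (m n : ℤ) : f ⁅L m, I n⁆ = ⁅f (L m), f (I n)⁆ := by
    rw [h.bracket_LI, map_smul, hL, hI, hI, h'.bracket_LI, add_sub_assoc]
    congr 1
    push_cast
    ring
  refine f.map_lie_of_basis B (fun i j => ?_) x y
  rcases i with m | m <;> rcases j with n | n <;> simp only [hBL, hBI]
  · rw [h.bracket_LL, map_smul, hL, hL, hL, h'.bracket_LL]
  · exact hLI m n
  · rw [← lie_skew, map_neg, hLI, lie_skew]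
  · rw [h.bracket_II, map_zero, hI, hI, h'.bracket_II]

end IsWab

/-- For any `k : ℤ`, the map `L m ↦ L m`, `I m ↦ I (m - k)` gives an isomorphism
of Lie algebras `W(a,b) ≃ W(a+k,b)`. -/
theorem wab_shift_iso (a b : ℂ) (k : ℤ) {W W' : Type*}
    [LieRing W] [LieAlgebra ℂ W] [LieRing W'] [LieAlgebra ℂ W']
    (L I : ℤ → W) (L' I' : ℤ → W')
    (h : IsWab a b W L I) (h' : IsWab (a + (k : ℂ)) b W' L' I') :
    ∃ σ : W ≃ₗ⁅ℂ⁆ W', (∀ m : ℤ, σ (L m) = L' m) ∧ (∀ m : ℤ, σ (I m) = I' (m - k)) := by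
  obtain ⟨f, hL, hI⟩ := h.exists_linearEquiv_shift h'
  exact ⟨{ f with map_lie' := h.map_lie_of_shift h' f.toLinearMap hL hI _ _ }, hL, hI⟩
end

section
/- Suppose families of complex numbers k_i^{(n)} and h_i^{(m)} (indexed by i,m,n ∈ ℤ) satisfy (i−m)·k_i^{(n)} = (2n−m−i)·h_{m−n+i}^{(m)} for all m,n,i ∈ ℤ. Then there exists λ ∈ ℂ such that k_i^{(m)} = h_i^{(m)} = δ_{m,i}·λ for all i,m ∈ ℤ (Kronecker delta). -/
/-- Lemma 2.5: if `(i - m) k i n = (2n - m - i) h (m - n + i) m` for all `m n i`,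
then `k i m = h i m = δ_{m,i} λ` for some `λ ∈ ℂ`. -/
theorem kronecker_lemma (k h : ℤ → ℤ → ℂ)
    (hyp : ∀ m n i : ℤ, ((i - m : ℤ) : ℂ) * k i n = ((2 * n - m - i : ℤ) : ℂ) * h (m - n + i) m) :
    ∃ lam : ℂ, ∀ i m : ℤ,
      k i m = (if m = i then lam else 0) ∧ h i m = (if m = i then lam else 0) := by
  have hcast : ∀ a b : ℤ, a ≠ b → ((a - b : ℤ) : ℂ) ≠ 0 := by
    intro a b hab
    exact_mod_cast sub_ne_zero.mpr hab
  -- off-diagonal h vanishes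
  have hA : ∀ m j : ℤ, j ≠ m → h j m = 0 := by
    intro m j hj
    have H := hyp m (2 * m - j) m
    have e1 : m - (2 * m - j) + m = j := by ring
    have e2 : (2 * (2 * m - j) - m - m : ℤ) = 2 * (m - j) := by ring
    rw [e1, e2, show ((m - m : ℤ):ℂ) * k m (2*m-j) = 0 by simp] at H
    have h2 : ((2 * (m - j) : ℤ) : ℂ) ≠ 0 := by
      exact_mod_cast mul_ne_zero two_ne_zero (sub_ne_zero.mpr (Ne.symm hj))
    rcases mul_eq_zero.mp H.symm with h' | h'
    · exact absurd h' h2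
    · exact h'
  -- off-diagonal k vanishes
  have hB : ∀ m i : ℤ, i ≠ m → k i m = 0 := by
    intro m i hi
    have H := hyp m m i
    have e1 : m - m + i = i := by ring
    have e2 : (2 * m - m - i : ℤ) = -(i - m) := by ring
    rw [e1, e2, hA m i hi] at H
    simp at H
    exact H.resolve_left (fun h' => hi (by exact_mod_cast sub_eq_zero.mp h'))
  -- diagonal entries are all equal
  have hC : ∀ n m : ℤ, n ≠ m → k n n = h m m := by
    intro n m hnm
    have H := hyp m n n
    have e1 : m - n + n = m := by ring
    have e2 : (2 * n - m - n : ℤ) = n - m := by ring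
    rw [e1, e2] at H
    exact mul_left_cancel₀ (hcast n m hnm) H
  refine ⟨k 0 0, fun i m => ?_⟩
  have hD : ∀ m : ℤ, h m m = k 0 0 := by
    intro m
    rcases eq_or_ne m 0 with rfl | hm
    · rw [← hC 1 0 one_ne_zero, hC 1 2 (by omega), ← hC 0 2 (by omega)]
    · exact (hC 0 m (Ne.symm hm)).symm
  have hK : ∀ n : ℤ, k n n = k 0 0 := by
    intro n
    rw [hC n (n + 1) (by omega), hD (n + 1)]
  constructor
  · rcases eq_or_ne m i with rfl | hmi
    · simp [hK m]
    · simp [hmi, hB m i (Ne.symm hmi)]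
  · rcases eq_or_ne m i with rfl | hmi
    · simp [hD m]
    · simp [hmi, hA m i (Ne.symm hmi)]
end

section
/- For a ∈ ℂ and a finitely supported family Ω = (μ_k)_{k∈ℤ} of complex numbers, the bilinear map Ψ_Ω on W(a,0) defined by Ψ_Ω(L_m, L_n) = Σ_k μ_k I_{m+n+k} and Ψ_Ω(L_m, I_n) = Ψ_Ω(I_n, L_m) = Ψ_Ω(I_m, I_n) = 0 is a symmetric biderivation of W(a,0). -/
/-- `f` is a biderivation: a derivation in each argument. -/
def IsBiderivation {W : Type*} [LieRing W] (f : W → W → W) : Prop :=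
  (∀ x y z : W, f ⁅x, y⁆ z = ⁅x, f y z⁆ + ⁅f x z, y⁆) ∧
  (∀ x y z : W, f x ⁅y, z⁆ = ⁅f x y, z⁆ + ⁅y, f x z⁆)

/-!
Symmetry and the Leibniz rule for `Ψ(x, ·)` are multilinear in their arguments, so they only
need to be checked on basis elements; a symmetric map all of whose partial maps `Ψ(x, ·)` are
derivations is a biderivation. `Ψ(I m, ·)` vanishes, and for `Ψ(L m, ·)` the only nontrivial
check is on a pair `L n, L p`: there the coefficient of `μ_k I (m+n+p+k)` on the right is
`-(m+p+k+a) + (m+n+k+a) = n - p`, as on the left. This cancellation is where `b = 0` is needed.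
-/

theorem Module.Basis.forall_mem_of_apply_mem {ι R M N : Type*} [Semiring R]
    [AddCommMonoid M] [Module R M] [AddCommMonoid N] [Module R N] (b : Module.Basis ι R M)
    (f : M →ₗ[R] N) {p : Submodule R N} (h : ∀ i, f (b i) ∈ p) (x : M) : f x ∈ p := by
  have : Submodule.span R (Set.range b) ≤ p.comap f :=
    Submodule.span_le.mpr (Set.range_subset_iff.mpr h)
  exact this (b.span_eq ▸ Submodule.mem_top)

theorem Module.Basis.linearMap_apply_comm {ι R M N : Type*} [CommSemiring R]
    [AddCommMonoid M] [Module R M] [AddCommMonoid N] [Module R N] (b : Module.Basis ι R M)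
    (f : M →ₗ[R] M →ₗ[R] N) (h : ∀ i j, f (b i) (b j) = f (b j) (b i)) (x y : M) :
    f x y = f y x :=
  LinearMap.congr_fun₂ (LinearMap.ext_basis b b (B' := f.flip) h) x y

theorem isBiderivation_of_symm {W : Type*} [LieRing W] {f : W → W → W}
    (hsymm : ∀ x y, f x y = f y x) (hleib : ∀ x y z, f x ⁅y, z⁆ = ⁅y, f x z⁆ + ⁅f x y, z⁆) :
    IsBiderivation f :=
  ⟨fun x y z => by rw [hsymm, hleib, hsymm z y, hsymm z x],
    fun x y z => by rw [hleib, add_comm]⟩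

section Leibniz

variable (R L : Type*) [CommRing R] [LieRing L] [LieAlgebra R L]

def leibnizSubmodule : Submodule R (Module.End R L) where
  carrier := {D | ∀ x y, D ⁅x, y⁆ = ⁅x, D y⁆ + ⁅D x, y⁆}
  add_mem' {D E} hD hE x y := by
    simp only [LinearMap.add_apply, lie_add, add_lie, hD x y, hE x y]
    abel
  zero_mem' x y := by simp
  smul_mem' c D hD x y := by
    simp only [LinearMap.smul_apply, lie_smul, smul_lie, hD x y, smul_add]

variable {R L}

theorem mem_leibnizSubmodule_of_basis {ι : Type*} (b : Module.Basis ι R L) {D : Module.End R L}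
    (h : ∀ i j, D ⁅b i, b j⁆ = ⁅b i, D (b j)⁆ + ⁅D (b i), b j⁆) :
    D ∈ leibnizSubmodule R L := by
  let defect : L →ₗ[R] L →ₗ[R] L := LinearMap.mk₂ R (fun x y => D ⁅x, y⁆ - ⁅x, D y⁆ - ⁅D x, y⁆)
    (fun x x' y => by simp only [add_lie, map_add]; abel)
    (fun c x y => by simp only [smul_lie, map_smul, smul_sub])
    (fun x y y' => by simp only [lie_add, map_add]; abel)
    (fun c x y => by simp only [lie_smul, map_smul, smul_sub])
  have hdefect : defect = 0 := LinearMap.ext_basis b b fun i j => by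
    simp [defect, h i j]
  intro x y
  have := LinearMap.congr_fun₂ hdefect x y
  simp only [defect, LinearMap.mk₂_apply, LinearMap.zero_apply] at this
  rw [← sub_eq_zero, ← sub_sub, this]

end Leibniz

namespace IsWab

variable {a : ℂ} {W : Type*} [LieRing W] [LieAlgebra ℂ W] {L I : ℤ → W}

theorem lie_L_I (hW : IsWab a 0 W L I) (m n : ℤ) :
    ⁅L m, I n⁆ = (-((n : ℂ) + a)) • I (m + n) := by
  rw [hW.bracket_LI, zero_mul, add_zero]

theorem lie_I_L (hW : IsWab a 0 W L I) (m n : ℤ) :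
    ⁅I n, L m⁆ = ((n : ℂ) + a) • I (m + n) := by
  rw [← lie_skew, hW.lie_L_I, neg_smul, neg_neg]

theorem lie_I_finsuppSum_I (hW : IsWab a 0 W L I) (Ω : ℤ →₀ ℂ) (n s : ℤ) :
    ⁅I n, Ω.sum fun k c => c • I (s + k)⁆ = 0 := by
  simp [Finsupp.sum, lie_sum, hW.bracket_II]

variable {Ω : ℤ →₀ ℂ} {f : W →ₗ[ℂ] W →ₗ[ℂ] W}

theorem psi_L_leibniz_L_L (hW : IsWab a 0 W L I)
    (hLL : ∀ m n : ℤ, f (L m) (L n) = Ω.sum fun k c => c • I (m + n + k)) (m n p : ℤ) :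
    f (L m) ⁅L n, L p⁆ = ⁅L n, f (L m) (L p)⁆ + ⁅f (L m) (L n), L p⁆ := by
  rw [hW.bracket_LL, map_smul, hLL, hLL, hLL, Finsupp.sum, Finsupp.sum,
    Finsupp.sum, lie_sum, sum_lie, Finset.smul_sum, ← Finset.sum_add_distrib]
  refine Finset.sum_congr rfl fun k _ => ?_
  rw [lie_smul, smul_lie, hW.lie_L_I, hW.lie_I_L, show n + (m + p + k) = m + n + p + k by ring,
    show p + (m + n + k) = m + n + p + k by ring, ← add_assoc m n p]
  push_cast
  module

theorem psi_L_mem_leibnizSubmodule (hW : IsWab a 0 W L I)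
    (hLL : ∀ m n : ℤ, f (L m) (L n) = Ω.sum fun k c => c • I (m + n + k))
    (hLI : ∀ m n : ℤ, f (L m) (I n) = 0) (m : ℤ) :
    f (L m) ∈ leibnizSubmodule ℂ W := by
  obtain ⟨B, hBL, hBI⟩ := hW.basis
  refine mem_leibnizSubmodule_of_basis B ?_
  rintro (n | n) (p | p) <;> simp only [hBL, hBI]
  · exact psi_L_leibniz_L_L hW hLL m n p
  · rw [hW.lie_L_I, map_smul, hLI, hLI, hLL, smul_zero, lie_zero, ← lie_skew,
      hW.lie_I_finsuppSum_I, neg_zero, add_zero]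
  · rw [hW.lie_I_L, map_smul, hLI, hLI, hLL, smul_zero, zero_lie, hW.lie_I_finsuppSum_I, add_zero]
  · rw [hW.bracket_II, map_zero, hLI, hLI, lie_zero, zero_lie, add_zero]

theorem psi_I_eq_zero (hW : IsWab a 0 W L I) (hIL : ∀ m n : ℤ, f (I n) (L m) = 0)
    (hII : ∀ m n : ℤ, f (I m) (I n) = 0) (m : ℤ) : f (I m) = 0 := by
  obtain ⟨B, hBL, hBI⟩ := hW.basis
  refine B.ext fun i => ?_
  rcases i with n | n
  · rw [hBL, hIL, LinearMap.zero_apply]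
  · rw [hBI, hII, LinearMap.zero_apply]

end IsWab

/-- The map `Ψ_Ω` (given on the basis by `Ψ_Ω(L m, L n) = Σ_k μ_k I (m+n+k)` and
zero on other basis pairs) is a symmetric biderivation of `W(a,0)`. -/
theorem psi_symmetric_biderivation (a : ℂ) (Ω : ℤ →₀ ℂ) {W : Type*}
    [LieRing W] [LieAlgebra ℂ W] (L I : ℤ → W) (hW : IsWab a 0 W L I)
    (f : W →ₗ[ℂ] W →ₗ[ℂ] W)
    (hLL : ∀ m n : ℤ, f (L m) (L n) = Ω.sum fun k c => c • I (m + n + k))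
    (hLI : ∀ m n : ℤ, f (L m) (I n) = 0)
    (hIL : ∀ m n : ℤ, f (I n) (L m) = 0)
    (hII : ∀ m n : ℤ, f (I m) (I n) = 0) :
    (∀ x y : W, f x y = f y x) ∧ IsBiderivation (fun x y => f x y) := by
  obtain ⟨B, hBL, hBI⟩ := hW.basis
  have hsymm : ∀ x y, f x y = f y x := B.linearMap_apply_comm f <| by
    rintro (m | m) (n | n) <;> simp only [hBL, hBI]
    · rw [hLL, hLL, add_comm m n]
    · rw [hLI, hIL]
    · rw [hIL, hLI]
    · rw [hII, hII]
  have hleib : ∀ x, f x ∈ leibnizSubmodule ℂ W := B.forall_mem_of_apply_mem f <| by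
    rintro (m | m)
    · rw [hBL]; exact hW.psi_L_mem_leibnizSubmodule hLL hLI m
    · rw [hBI, hW.psi_I_eq_zero hIL hII]; exact Submodule.zero_mem _
  exact ⟨hsymm, isBiderivation_of_symm hsymm fun x => hleib x⟩
end

section
/- For a ∈ ℤ and μ ∈ ℂ, the bilinear map Θ^a_μ on W(a,−1) defined by Θ^a_μ(L_m, L_n) = (m−n)·μ·I_{m+n−a} and Θ^a_μ(L_m, I_n) = Θ^a_μ(I_n, L_m) = Θ^a_μ(I_m, I_n) = 0 is a skew-symmetric biderivation of W(a,−1). -/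
theorem map_lie_eq_lie_map_left {W F : Type*} [LieRing W] [FunLike F W W]
    [AddMonoidHomClass F W W] (φ : F) (hφ : ∀ x y : W, φ ⁅x, y⁆ = ⁅x, φ y⁆) (x y : W) :
    φ ⁅x, y⁆ = ⁅φ x, y⁆ := by
  rw [← lie_skew, map_neg, hφ, ← lie_skew y, neg_neg]

theorem isBiderivation_map_lie {W F : Type*} [LieRing W] [FunLike F W W]
    [AddMonoidHomClass F W W] (φ : F) (hφ : ∀ x y : W, φ ⁅x, y⁆ = ⁅x, φ y⁆) :
    IsBiderivation (fun x y => φ ⁅x, y⁆) := by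
  refine ⟨fun x y z => ?_, fun x y z => ?_⟩ <;> dsimp only
  · rw [lie_lie, map_sub, hφ x ⁅y, z⁆, hφ y ⁅x, z⁆, ← lie_skew (φ ⁅x, z⁆), sub_eq_add_neg]
  · rw [leibniz_lie, map_add, map_lie_eq_lie_map_left φ hφ, hφ y]

theorem IsWab.bracket_IL {a b : ℂ} {W : Type*} [LieRing W] [LieAlgebra ℂ W] {L I : ℤ → W}
    (hW : IsWab a b W L I) (m n : ℤ) : ⁅I m, L n⁆ = ((m : ℂ) + a + b * n) • I (n + m) := by
  rw [← lie_skew, hW.bracket_LI, neg_smul, neg_neg]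

section Theta

open Module

variable {W : Type*} [LieRing W] [LieAlgebra ℂ W] {L I : ℤ → W} (B : Basis (ℤ ⊕ ℤ) ℂ W)

noncomputable def thetaMap (I : ℤ → W) (a : ℤ) (μ : ℂ) : W →ₗ[ℂ] W :=
  B.constr ℂ (Sum.elim (fun m => μ • I (m - a)) 0)

theorem thetaMap_L (hBL : ∀ m, B (.inl m) = L m) (a : ℤ) (μ : ℂ) (m : ℤ) :
    thetaMap B I a μ (L m) = μ • I (m - a) := by
  simp [thetaMap, ← hBL]

theorem thetaMap_I (hBI : ∀ m, B (.inr m) = I m) (a : ℤ) (μ : ℂ) (m : ℤ) :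
    thetaMap B I a μ (I m) = 0 := by
  simp [thetaMap, ← hBI]

theorem IsWab.thetaMap_lie {a : ℤ} (hW : IsWab (a : ℂ) (-1) W L I)
    (hBL : ∀ m, B (.inl m) = L m) (hBI : ∀ m, B (.inr m) = I m) (μ : ℂ) (x y : W) :
    thetaMap B I a μ ⁅x, y⁆ = ⁅x, thetaMap B I a μ y⁆ := by
  let bracket : W →ₗ[ℂ] W →ₗ[ℂ] W := LieModule.toEnd ℂ W W
  suffices bracket.compr₂ (thetaMap B I a μ) = bracket.compl₂ (thetaMap B I a μ) from
    congr($this x y)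
  refine LinearMap.ext_basis B B fun i j => ?_
  rcases i with m | m <;> rcases j with n | n <;>
    simp only [bracket, hBL, hBI, LinearMap.compr₂_apply, LinearMap.compl₂_apply,
      LieHom.coe_toLinearMap, LieModule.toEnd_apply_apply, hW.bracket_LL, hW.bracket_LI,
      hW.bracket_IL, hW.bracket_II, map_smul, map_zero, thetaMap_L B hBL, thetaMap_I B hBI,
      smul_zero, Int.cast_sub, neg_mul, one_mul, neg_add_rev, neg_neg, sub_add_cancel]
  rw [← sub_eq_add_neg, smul_comm, add_sub_assoc]

theorem IsWab.apply_eq_thetaMap_lie {c b : ℂ} (hW : IsWab c b W L I)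
    (hBL : ∀ m, B (.inl m) = L m) (hBI : ∀ m, B (.inr m) = I m) {a : ℤ} {μ : ℂ}
    (f : W →ₗ[ℂ] W →ₗ[ℂ] W)
    (hLL : ∀ m n : ℤ, f (L m) (L n) = (((m - n : ℤ) : ℂ) * μ) • I (m + n - a))
    (hLI : ∀ m n : ℤ, f (L m) (I n) = 0) (hIL : ∀ m n : ℤ, f (I n) (L m) = 0)
    (hII : ∀ m n : ℤ, f (I m) (I n) = 0) (x y : W) :
    f x y = thetaMap B I a μ ⁅x, y⁆ := by
  let bracket : W →ₗ[ℂ] W →ₗ[ℂ] W := LieModule.toEnd ℂ W W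
  suffices f = bracket.compr₂ (thetaMap B I a μ) from congr($this x y)
  refine LinearMap.ext_basis B B fun i j => ?_
  rcases i with m | m <;> rcases j with n | n <;>
    simp only [bracket, hBL, hBI, hLL, hLI, hIL, hII, LinearMap.compr₂_apply,
      LieHom.coe_toLinearMap, LieModule.toEnd_apply_apply, hW.bracket_LL, hW.bracket_LI,
      hW.bracket_IL, hW.bracket_II, map_smul, map_zero, thetaMap_L B hBL, thetaMap_I B hBI,
      smul_zero, Int.cast_sub]
  rw [mul_smul]

end Theta

/-- The map `Θ^a_μ` (given on the basis by `Θ^a_μ(L m, L n) = (m-n) μ I (m+n-a)`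
and zero on other basis pairs) is a skew-symmetric biderivation of `W(a,-1)`
for `a ∈ ℤ`. -/
theorem theta_skew_biderivation (a : ℤ) (μ : ℂ) {W : Type*}
    [LieRing W] [LieAlgebra ℂ W] (L I : ℤ → W) (hW : IsWab (a : ℂ) (-1) W L I)
    (f : W →ₗ[ℂ] W →ₗ[ℂ] W)
    (hLL : ∀ m n : ℤ, f (L m) (L n) = (((m - n : ℤ) : ℂ) * μ) • I (m + n - a))
    (hLI : ∀ m n : ℤ, f (L m) (I n) = 0)
    (hIL : ∀ m n : ℤ, f (I n) (L m) = 0)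
    (hII : ∀ m n : ℤ, f (I m) (I n) = 0) :
    (∀ x y : W, f x y = - f y x) ∧ IsBiderivation (fun x y => f x y) := by
  obtain ⟨B, hBL, hBI⟩ := hW.basis
  have hf : (fun x y => f x y) = fun x y => thetaMap B I a μ ⁅x, y⁆ :=
    funext₂ (hW.apply_eq_thetaMap_lie B hBL hBI f hLL hLI hIL hII)
  refine ⟨fun x y => ?_, hf ▸ isBiderivation_map_lie _ (hW.thetaMap_lie B hBL hBI μ)⟩
  simp only [congrFun₂ hf, ← map_neg, lie_skew]
end

section
/- On W(a,0), the biderivation Ψ_Ω is non-inner whenever some μ_k ≠ 0: there is no λ ∈ ℂ with Ψ_Ω(x,y) = λ[x,y] for all x,y ∈ W(a,0). -/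
/-! Since `[L₀, L₀] = 0`, an inner biderivation vanishes at `(L₀, L₀)`, whereas
`Ψ_Ω(L₀, L₀) = Σ_k μ_k I_k` is nonzero by the linear independence of the `I_k`. -/

theorem IsWab.linearIndependent_I {a b : ℂ} {W : Type*} [LieRing W] [LieAlgebra ℂ W]
    {L I : ℤ → W} (hW : IsWab a b W L I) : LinearIndependent ℂ I := by
  obtain ⟨B, -, hBI⟩ := hW.basis
  have hI : I = B ∘ Sum.inr := funext fun m => (hBI m).symm
  exact hI ▸ B.linearIndependent.comp Sum.inr Sum.inr_injective

theorem LinearIndependent.finsupp_eq_zero_of_sum_smul_eq_zero {ι R M : Type*} [Semiring R]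
    [AddCommMonoid M] [Module R M] {v : ι → M} (hv : LinearIndependent R v) {c : ι →₀ R}
    (hc : (c.sum fun i r => r • v i) = 0) : c = 0 :=
  hv <| by rwa [map_zero, Finsupp.linearCombination_apply]

theorem psi_not_inner_general (a : ℂ) (Ω : ℤ →₀ ℂ) (hΩ : Ω ≠ 0) {W : Type*}
    [LieRing W] [LieAlgebra ℂ W] (L I : ℤ → W) (hW : IsWab a 0 W L I)
    (f : W →ₗ[ℂ] W →ₗ[ℂ] W)
    (hLL : ∀ m n : ℤ, f (L m) (L n) = Ω.sum fun k c => c • I (m + n + k)) :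
    ¬ ∃ lam : ℂ, ∀ x y : W, f x y = lam • ⁅x, y⁆ := by
  rintro ⟨lam, hlam⟩
  have hL₀ : (Ω.sum fun k c => c • I k) = 0 := by
    simpa [hLL] using hlam (L 0) (L 0)
  exact hΩ (hW.linearIndependent_I.finsupp_eq_zero_of_sum_smul_eq_zero hL₀)

/-- If some `μ_k ≠ 0`, the biderivation `Ψ_Ω` of `W(a,0)` is not inner. -/
theorem psi_not_inner (a : ℂ) (Ω : ℤ →₀ ℂ) (hΩ : Ω ≠ 0) {W : Type*}
    [LieRing W] [LieAlgebra ℂ W] (L I : ℤ → W) (hW : IsWab a 0 W L I)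
    (f : W →ₗ[ℂ] W →ₗ[ℂ] W)
    (hLL : ∀ m n : ℤ, f (L m) (L n) = Ω.sum fun k c => c • I (m + n + k))
    (hLI : ∀ m n : ℤ, f (L m) (I n) = 0)
    (hIL : ∀ m n : ℤ, f (I n) (L m) = 0)
    (hII : ∀ m n : ℤ, f (I m) (I n) = 0) :
    ¬ ∃ lam : ℂ, ∀ x y : W, f x y = lam • ⁅x, y⁆ :=
  psi_not_inner_general a Ω hΩ L I hW f hLL
end

section
/- On W(0,2), the map D₂^{0,2} defined on basis elements by D₂^{0,2}(L_m) = m³·I_m and D₂^{0,2}(I_m) = 0 is a derivation of the Lie algebra W(0,2). -/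
/- Both sides of the Leibniz rule are bilinear in `(x, y)`, so it suffices to check it on pairs of
basis vectors. On `(L m, L n)` it reduces to the identity
`m³ (m + 2n) - n³ (n + 2m) = (m - n) (m + n)³`; on every other pair both sides vanish, because the
`I`'s span an abelian ideal killed by `D` and `D` maps everything into it. -/

open LieModule in
theorem LieAlgebra.leibniz_of_basis {R L ι : Type*} [CommRing R] [LieRing L] [LieAlgebra R L]
    (B : Module.Basis ι R L) (D : L →ₗ[R] L)
    (h : ∀ i j, D ⁅B i, B j⁆ = ⁅D (B i), B j⁆ + ⁅B i, D (B j)⁆) (x y : L) :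
    D ⁅x, y⁆ = ⁅D x, y⁆ + ⁅x, D y⁆ := by
  let ad : L →ₗ[R] Module.End R L := toEnd R L L
  have hbilin : ad.compr₂ D = ad ∘ₗ D + ad.compl₂ D :=
    LinearMap.ext_basis B B fun i j => by simpa [ad] using h i j
  simpa [ad] using LinearMap.congr_fun₂ hbilin x y

namespace IsWab

variable {a b : ℂ} {W : Type*} [LieRing W] [LieAlgebra ℂ W] {L I : ℤ → W}

theorem bracket_IL_s12 (hW : IsWab a b W L I) (m n : ℤ) :
    ⁅I m, L n⁆ = ((m : ℂ) + a + b * n) • I (m + n) := by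
  rw [← lie_skew, hW.bracket_LI, neg_smul, neg_neg, add_comm n m]

end IsWab

/-- `D₂^{0,2}` is a derivation of `W(0,2)`. -/
theorem derivation_W02 {W : Type*} [LieRing W] [LieAlgebra ℂ W]
    (L I : ℤ → W) (hW : IsWab 0 2 W L I) (D : W →ₗ[ℂ] W)
    (hDL : ∀ m : ℤ, D (L m) = ((m ^ 3 : ℤ) : ℂ) • I m)
    (hDI : ∀ m : ℤ, D (I m) = 0) :
    ∀ x y : W, D ⁅x, y⁆ = ⁅D x, y⁆ + ⁅x, D y⁆ := by
  obtain ⟨B, hBL, hBI⟩ := hW.basis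
  refine LieAlgebra.leibniz_of_basis B D ?_
  rintro (m | m) (n | n) <;>
    simp only [hBL, hBI, hW.bracket_LL, hW.bracket_LI, hW.bracket_IL_s12, hW.bracket_II, map_smul,
      hDL, hDI, smul_lie, lie_smul, lie_zero, zero_lie, smul_zero, add_zero, map_zero]
  · match_scalars
    ring
end

section
/- Every symmetric biderivation of W(0,2) is identically zero: if f ∈ Bid₊(W(0,2)), then f(x,y) = 0 for all x,y ∈ W(0,2). -/
/-!
Fixing one argument turns `f` into a Lie derivation, so the Leibniz rule for `⁅L m, L n⁆` and
`⁅L m, I n⁆`, read in the basis, gives linear recursions for the coordinates of `f` on pairs of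
basis vectors. On `L × L` these recursions and the symmetry of `f` force every coordinate to
vanish, because `ad (L m)` acts on the `L`- and on the `I`-coordinates with weights `-1` and `2`,
both outside `{0, 1}`. A derivation of `W(0,2)` maps each `I n` into the span of the `I k`, and
once it kills the `L`-coordinates of the `L m`, it maps `I n` to `c • I n` with `c` independent of
`n`; symmetry of `f` then kills the remaining constants.
-/
theorem Module.Basis.repr_inl_of_eq_sumElim {ι κ R M : Type*} [Semiring R] [AddCommMonoid M]
    [Module R M] (B : Module.Basis (ι ⊕ κ) R M) {L : ι → M} {I : κ → M}
    (hB : ⇑B = Sum.elim L I) (j : ι) : B.repr (L j) = Finsupp.single (.inl j) 1 := by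
  simpa [hB] using B.repr_self (.inl j)

theorem Module.Basis.repr_inr_of_eq_sumElim {ι κ R M : Type*} [Semiring R] [AddCommMonoid M]
    [Module R M] (B : Module.Basis (ι ⊕ κ) R M) {L : ι → M} {I : κ → M}
    (hB : ⇑B = Sum.elim L I) (j : κ) : B.repr (I j) = Finsupp.single (.inr j) 1 := by
  simpa [hB] using B.repr_self (.inr j)

def IsBiderivation.leftDerivation {R W : Type*} [CommRing R] [LieRing W] [LieAlgebra R W]
    {f : W →ₗ[R] W →ₗ[R] W} (hf : IsBiderivation (fun x y => f x y)) (z : W) :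
    LieDerivation R W W where
  toLinearMap := f.flip z
  leibniz' x y := by
    simp only [LinearMap.flip_apply, hf.1 x y z, sub_eq_add_neg, lie_skew]

@[simp]
theorem IsBiderivation.leftDerivation_apply {R W : Type*} [CommRing R] [LieRing W]
    [LieAlgebra R W] {f : W →ₗ[R] W →ₗ[R] W} (hf : IsBiderivation (fun x y => f x y))
    (z x : W) : hf.leftDerivation z x = f x z :=
  rfl

/-- `A n p s` stands for the `s`-th coordinate of `f (L n) (L p)` along vectors `v s` on which
`ad (L m)` acts by `v k ↦ -(k + b * m) • v (k + m)`; the Leibniz rule for `⁅L m, L n⁆` then reads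
as this recursion. -/
def WittRecursion (b : ℂ) (A : ℤ → ℤ → ℤ → ℂ) : Prop :=
  ∀ m n p s : ℤ, (m - n : ℂ) * A (m + n) p s =
    -(s - m + b * m : ℂ) * A n p (s - m) + (s - n + b * n : ℂ) * A m p (s - n)

namespace WittRecursion

variable {b : ℂ} {A : ℤ → ℤ → ℤ → ℂ}

theorem sub_mul_apply (h : WittRecursion b A) (n p s : ℤ) :
    (s - n : ℂ) * A n p s = (s + (b - 1) * n : ℂ) * A 0 p (s - n) := by
  have e := h 0 n p s
  simp only [Int.cast_zero, zero_add, sub_zero, mul_zero, add_zero, neg_mul] at e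
  linear_combination e

theorem apply_zero_zero (h : WittRecursion b A) (hA : ∀ n p s, A n p s = A p n s)
    (hb : b * (1 - b) ≠ 0) (t : ℤ) : A 0 0 t = 0 := by
  have e1 := h.sub_mul_apply 1 2 (t + 3)
  have e2 := h.sub_mul_apply 2 1 (t + 3)
  have e3 := h.sub_mul_apply 2 0 (t + 2)
  have e4 := h.sub_mul_apply 1 0 (t + 1)
  rw [show t + 3 - 1 = t + 2 by ring, hA 0 2] at e1
  rw [show t + 3 - 2 = t + 1 by ring, hA 0 1, hA 2 1] at e2
  rw [show t + 2 - 2 = t by ring] at e3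
  rw [show t + 1 - 1 = t by ring] at e4
  push_cast at e1 e2 e3 e4
  -- eliminate `A 1 2 (t + 3)`, `A 2 0 (t + 2)` and `A 1 0 (t + 1)`
  have key : (2 * (b * (1 - b))) * A 0 0 t = 0 := by
    linear_combination (-(t * (t + 1) : ℂ)) * e1 - ((t + 1) * (t + 2 + b) : ℂ) * e3
      + (t * (t + 2) : ℂ) * e2 + ((t + 2) * (t + 1 + 2 * b) : ℂ) * e4
  exact (mul_eq_zero.mp key).resolve_left (mul_ne_zero two_ne_zero hb)

theorem apply_self_zero_self (h : WittRecursion b A) (hA : ∀ n p s, A n p s = A p n s)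
    (hb : b * (1 - b) ≠ 0) (n : ℤ) : A n 0 n = 0 := by
  have hg (n p : ℤ) : (n * (p + b * n) : ℂ) * A p 0 p = (p * (n + b * p) : ℂ) * A n 0 n := by
    have e1 := h.sub_mul_apply n p (n + p)
    have e2 := h.sub_mul_apply p n (n + p)
    rw [show n + p - n = p by ring, hA 0 p] at e1
    rw [show n + p - p = n by ring, hA 0 n, hA p n] at e2
    push_cast at e1 e2
    linear_combination (p : ℂ) * e2 - (n : ℂ) * e1
  have g12 := hg 1 2
  have g13 := hg 1 3
  have g23 := hg 2 3
  push_cast at g12 g13 g23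
  -- a linear system in `A 1 0 1`, `A 2 0 2`, `A 3 0 3` with determinant `12 b (1 - b)`
  have h1 : (12 * (b * (1 - b))) * A 1 0 1 = 0 := by
    linear_combination 3 * (3 + b) * (2 + 3 * b) * g12 - 2 * (3 + 2 * b) * (2 + b) * g13
      + (3 + b) * (2 + b) * g23
  have h2 : (6 * (b * (1 - b))) * A 2 0 2 = 0 := by
    linear_combination 3 * (1 + 3 * b) * (3 + 2 * b) * g12
      - 2 * (1 + 2 * b) * (3 + 2 * b) * g13 + (1 + 2 * b) * (3 + b) * g23
  have hn1 := hg n 1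
  have hn2 := hg n 2
  rw [(mul_eq_zero.mp h1).resolve_left (mul_ne_zero (by norm_num) hb)] at hn1
  rw [(mul_eq_zero.mp h2).resolve_left (mul_ne_zero (by norm_num) hb)] at hn2
  push_cast at hn1 hn2
  have key : (2 * b) * A n 0 n = 0 := by linear_combination 2 * hn1 - hn2
  exact (mul_eq_zero.mp key).resolve_left (mul_ne_zero two_ne_zero (left_ne_zero_of_mul hb))

theorem apply_zero_right (h : WittRecursion b A) (hA : ∀ n p s, A n p s = A p n s)
    (hb : b * (1 - b) ≠ 0) (n s : ℤ) : A n 0 s = 0 := by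
  rcases eq_or_ne s n with rfl | hsn
  · exact h.apply_self_zero_self hA hb s
  · have e := h.sub_mul_apply n 0 s
    rw [h.apply_zero_zero hA hb, mul_zero] at e
    exact (mul_eq_zero.mp e).resolve_left (sub_ne_zero.mpr (by exact_mod_cast hsn))

theorem apply_of_ne (h : WittRecursion b A) (hA : ∀ n p s, A n p s = A p n s)
    (hb : b * (1 - b) ≠ 0) {n s : ℤ} (hsn : s ≠ n) (p : ℤ) : A n p s = 0 := by
  have e := h.sub_mul_apply n p s
  rw [hA 0 p, h.apply_zero_right hA hb, mul_zero] at e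
  exact (mul_eq_zero.mp e).resolve_left (sub_ne_zero.mpr (by exact_mod_cast hsn))

theorem apply_self_self_self (h : WittRecursion b A) (hA : ∀ n p s, A n p s = A p n s)
    (hb : b * (1 - b) ≠ 0) (n : ℤ) : A n n n = 0 := by
  obtain ⟨m, hm0, hmn⟩ : ∃ m : ℤ, 0 < m ∧ n < m := ⟨n.natAbs + 1, by omega, by omega⟩
  have e := h m (n - m) n n
  rw [show m + (n - m) = n by ring, show n - (n - m) = m by ring, hA (n - m), hA m,
    h.apply_of_ne hA hb (show n - m ≠ n by omega), h.apply_of_ne hA hb (show m ≠ n by omega),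
    mul_zero, mul_zero, add_zero] at e
  push_cast at e
  exact (mul_eq_zero.mp e).resolve_left (by norm_cast; omega)

theorem eq_zero (h : WittRecursion b A) (hA : ∀ n p s, A n p s = A p n s)
    (hb : b * (1 - b) ≠ 0) (n p s : ℤ) : A n p s = 0 := by
  rcases eq_or_ne s n with rfl | hsn
  · rcases eq_or_ne s p with rfl | hsp
    · exact h.apply_self_self_self hA hb s
    · rw [hA]
      exact h.apply_of_ne hA hb hsp s
  · exact h.apply_of_ne hA hb hsn p

end WittRecursion

namespace IsWab

variable {W : Type*} [LieRing W] [LieAlgebra ℂ W] {L I : ℤ → W} {B : Module.Basis (ℤ ⊕ ℤ) ℂ W}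

section General

variable {a b : ℂ}

theorem repr_lie_L_inl (hW : IsWab a b W L I) (hB : ⇑B = Sum.elim L I) (m s : ℤ) (v : W) :
    B.repr ⁅L m, v⁆ (.inl s) = (2 * m - s : ℂ) * B.repr v (.inl (s - m)) := by
  suffices (B.coord (.inl s)).comp (LieAlgebra.ad ℂ W (L m)) =
      (2 * m - s : ℂ) • B.coord (.inl (s - m)) from LinearMap.congr_fun this v
  refine B.ext fun i => ?_
  rcases i with k | k
  · rcases eq_or_ne k (s - m) with rfl | hk
    · simp [hB, hW.bracket_LL, B.repr_inl_of_eq_sumElim hB]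
      ring
    · simp [hB, hW.bracket_LL, B.repr_inl_of_eq_sumElim hB, hk, show m + k ≠ s by omega]
  · simp [hB, hW.bracket_LI, B.repr_inr_of_eq_sumElim hB]

theorem repr_lie_L_inr (hW : IsWab a b W L I) (hB : ⇑B = Sum.elim L I) (m s : ℤ) (v : W) :
    B.repr ⁅L m, v⁆ (.inr s) = -(s - m + a + b * m : ℂ) * B.repr v (.inr (s - m)) := by
  suffices (B.coord (.inr s)).comp (LieAlgebra.ad ℂ W (L m)) =
      -(s - m + a + b * m : ℂ) • B.coord (.inr (s - m)) from LinearMap.congr_fun this v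
  refine B.ext fun i => ?_
  rcases i with k | k
  · simp [hB, hW.bracket_LL, B.repr_inl_of_eq_sumElim hB]
  · rcases eq_or_ne k (s - m) with rfl | hk
    · simp [hB, hW.bracket_LI, B.repr_inr_of_eq_sumElim hB]
    · simp [hB, hW.bracket_LI, B.repr_inr_of_eq_sumElim hB, hk, show m + k ≠ s by omega]

theorem repr_lie_I_inl (hW : IsWab a b W L I) (hB : ⇑B = Sum.elim L I) (m s : ℤ) (v : W) :
    B.repr ⁅I m, v⁆ (.inl s) = 0 := by
  suffices (B.coord (.inl s)).comp (LieAlgebra.ad ℂ W (I m)) = 0 from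
    LinearMap.congr_fun this v
  refine B.ext fun i => ?_
  rcases i with k | k
  · simp [hB, ← lie_skew (I m), hW.bracket_LI, B.repr_inr_of_eq_sumElim hB]
  · simp [hB, hW.bracket_II]

theorem repr_lie_I_inr (hW : IsWab a b W L I) (hB : ⇑B = Sum.elim L I) (m s : ℤ) (v : W) :
    B.repr ⁅I m, v⁆ (.inr s) = (m + a + b * (s - m) : ℂ) * B.repr v (.inl (s - m)) := by
  suffices (B.coord (.inr s)).comp (LieAlgebra.ad ℂ W (I m)) =
      (m + a + b * (s - m) : ℂ) • B.coord (.inl (s - m)) from LinearMap.congr_fun this v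
  have hrL := B.repr_inl_of_eq_sumElim hB
  have hrI := B.repr_inr_of_eq_sumElim hB
  refine B.ext fun i => ?_
  rcases i with k | k
  · rcases eq_or_ne k (s - m) with rfl | hk
    · simp [hB, ← lie_skew (I m), hW.bracket_LI, hrI, hrL]
    · simp [hB, ← lie_skew (I m), hW.bracket_LI, hrI, hrL, hk, show k + m ≠ s by omega]
  · simp [hB, hW.bracket_II, hrI]

theorem repr_derivation_L_inl (hW : IsWab a b W L I) (hB : ⇑B = Sum.elim L I)
    (D : LieDerivation ℂ W W) (m n s : ℤ) :
    (m - n : ℂ) * B.repr (D (L (m + n))) (.inl s) =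
      (2 * m - s : ℂ) * B.repr (D (L n)) (.inl (s - m)) -
        (2 * n - s : ℂ) * B.repr (D (L m)) (.inl (s - n)) := by
  have h := congrArg (B.repr · (.inl s)) (D.apply_lie_eq_sub (L m) (L n))
  simp only [hW.bracket_LL, map_smul, map_sub, Finsupp.smul_apply, Finsupp.sub_apply,
    smul_eq_mul, hW.repr_lie_L_inl hB] at h
  push_cast at h
  exact h

theorem repr_derivation_L_inr (hW : IsWab a b W L I) (hB : ⇑B = Sum.elim L I)
    (D : LieDerivation ℂ W W) (m n s : ℤ) :
    (m - n : ℂ) * B.repr (D (L (m + n))) (.inr s) =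
      -(s - m + a + b * m : ℂ) * B.repr (D (L n)) (.inr (s - m)) +
        (s - n + a + b * n : ℂ) * B.repr (D (L m)) (.inr (s - n)) := by
  have h := congrArg (B.repr · (.inr s)) (D.apply_lie_eq_sub (L m) (L n))
  simp only [hW.bracket_LL, map_smul, map_sub, Finsupp.smul_apply, Finsupp.sub_apply,
    smul_eq_mul, hW.repr_lie_L_inr hB] at h
  push_cast at h
  linear_combination h

theorem repr_derivation_I_inl (hW : IsWab a b W L I) (hB : ⇑B = Sum.elim L I)
    (D : LieDerivation ℂ W W) (m n s : ℤ) :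
    -(n + a + b * m : ℂ) * B.repr (D (I (m + n))) (.inl s) =
      (2 * m - s : ℂ) * B.repr (D (I n)) (.inl (s - m)) := by
  have h := congrArg (B.repr · (.inl s)) (D.apply_lie_eq_sub (L m) (I n))
  simpa only [hW.bracket_LI, map_smul, map_sub, Finsupp.smul_apply, Finsupp.sub_apply,
    smul_eq_mul, hW.repr_lie_L_inl hB, hW.repr_lie_I_inl hB, sub_zero] using h

theorem repr_derivation_I_inr (hW : IsWab a b W L I) (hB : ⇑B = Sum.elim L I)
    (D : LieDerivation ℂ W W) (m n s : ℤ) :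
    -(n + a + b * m : ℂ) * B.repr (D (I (m + n))) (.inr s) =
      -(s - m + a + b * m : ℂ) * B.repr (D (I n)) (.inr (s - m)) -
        (n + a + b * (s - n) : ℂ) * B.repr (D (L m)) (.inl (s - n)) := by
  have h := congrArg (B.repr · (.inr s)) (D.apply_lie_eq_sub (L m) (I n))
  simpa only [hW.bracket_LI, map_smul, map_sub, Finsupp.smul_apply, Finsupp.sub_apply,
    smul_eq_mul, hW.repr_lie_L_inr hB, hW.repr_lie_I_inr hB] using h

end General

theorem repr_derivation_I_inl_eq_zero (hW : IsWab 0 2 W L I) (hB : ⇑B = Sum.elim L I)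
    (D : LieDerivation ℂ W W) (n s : ℤ) : B.repr (D (I n)) (.inl s) = 0 := by
  have e := hW.repr_derivation_I_inl hB D
  have hdiag (m n : ℤ) : (n + 2 * m : ℂ) * B.repr (D (I (m + n))) (.inl (m + n)) =
      (n - m : ℂ) * B.repr (D (I n)) (.inl n) := by
    have := e m n (m + n)
    rw [show m + n - m = n by ring] at this
    push_cast at this
    linear_combination -this
  have h22 : B.repr (D (I 2)) (.inl 2) = 0 := by
    have := hdiag 1 1
    norm_num at this
    exact this
  have h00 : B.repr (D (I 0)) (.inl 0) = 0 := by
    have := hdiag 2 0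
    norm_num [h22] at this
    exact this
  rcases eq_or_ne s n with rfl | hsn
  · rcases eq_or_ne s 0 with rfl | hs0
    · exact h00
    · have := hdiag s 0
      rw [add_zero, h00, mul_zero] at this
      exact (mul_eq_zero.mp this).resolve_left (by push_cast; simpa using hs0)
  · have := e 0 n s
    simp only [Int.cast_zero, mul_zero, add_zero, zero_add, sub_zero] at this
    have key : (s - n : ℂ) * B.repr (D (I n)) (.inl s) = 0 := by linear_combination this
    exact (mul_eq_zero.mp key).resolve_left (sub_ne_zero.mpr (by exact_mod_cast hsn))

theorem repr_derivation_I_inr_recursion (hW : IsWab 0 2 W L I) (hB : ⇑B = Sum.elim L I)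
    (D : LieDerivation ℂ W W) (hDL : ∀ m s, B.repr (D (L m)) (.inl s) = 0) (m n s : ℤ) :
    (n + 2 * m : ℂ) * B.repr (D (I (m + n))) (.inr s) =
      (s + m : ℂ) * B.repr (D (I n)) (.inr (s - m)) := by
  have e := hW.repr_derivation_I_inr hB D m n s
  rw [hDL, mul_zero, sub_zero] at e
  linear_combination -e

theorem repr_derivation_I_inr_of_ne (hW : IsWab 0 2 W L I) (hB : ⇑B = Sum.elim L I)
    (D : LieDerivation ℂ W W) (hDL : ∀ m s, B.repr (D (L m)) (.inl s) = 0) {n s : ℤ}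
    (hsn : s ≠ n) : B.repr (D (I n)) (.inr s) = 0 := by
  have e := hW.repr_derivation_I_inr_recursion hB D hDL 0 n s
  simp only [Int.cast_zero, mul_zero, add_zero, zero_add, sub_zero] at e
  have key : (s - n : ℂ) * B.repr (D (I n)) (.inr s) = 0 := by linear_combination -e
  exact (mul_eq_zero.mp key).resolve_left (sub_ne_zero.mpr (by exact_mod_cast hsn))

theorem repr_derivation_I_inr_self (hW : IsWab 0 2 W L I) (hB : ⇑B = Sum.elim L I)
    (D : LieDerivation ℂ W W) (hDL : ∀ m s, B.repr (D (L m)) (.inl s) = 0) (n : ℤ) :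
    B.repr (D (I n)) (.inr n) = B.repr (D (I 0)) (.inr 0) := by
  rcases eq_or_ne n 0 with rfl | hn
  · rfl
  have e := hW.repr_derivation_I_inr_recursion hB D hDL n 0 n
  rw [add_zero, sub_self] at e
  have key : (2 * n : ℂ) * (B.repr (D (I n)) (.inr n) - B.repr (D (I 0)) (.inr 0)) = 0 := by
    push_cast at e
    linear_combination e
  exact sub_eq_zero.mp ((mul_eq_zero.mp key).resolve_left (by simpa using hn))

variable {f : W →ₗ[ℂ] W →ₗ[ℂ] W}

theorem biderivation_L_L_eq_zero (hW : IsWab 0 2 W L I) (hB : ⇑B = Sum.elim L I)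
    (hf : IsBiderivation (fun x y => f x y)) (hsymm : ∀ x y, f x y = f y x) (n p : ℤ) :
    f (L n) (L p) = 0 := by
  have hinl : WittRecursion (-1) fun n p s => B.repr (f (L n) (L p)) (.inl s) := by
    intro m n p s
    have := hW.repr_derivation_L_inl hB (hf.leftDerivation (L p)) m n s
    simp only [IsBiderivation.leftDerivation_apply] at this
    linear_combination this
  have hinr : WittRecursion 2 fun n p s => B.repr (f (L n) (L p)) (.inr s) := by
    intro m n p s
    have := hW.repr_derivation_L_inr hB (hf.leftDerivation (L p)) m n s
    simp only [IsBiderivation.leftDerivation_apply] at this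
    linear_combination this
  refine B.repr.injective (Finsupp.ext fun i => ?_)
  rcases i with s | s
  · simpa using hinl.eq_zero (fun n p s => by rw [hsymm]) (by norm_num) n p s
  · simpa using hinr.eq_zero (fun n p s => by rw [hsymm]) (by norm_num) n p s

theorem repr_biderivation_I_inl_eq_zero (hW : IsWab 0 2 W L I) (hB : ⇑B = Sum.elim L I)
    (hf : IsBiderivation (fun x y => f x y)) (n : ℤ) (z : W) (s : ℤ) :
    B.repr (f (I n) z) (.inl s) = 0 :=
  hW.repr_derivation_I_inl_eq_zero hB (hf.leftDerivation z) n s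

theorem biderivation_I_eq_zero (hW : IsWab 0 2 W L I) (hB : ⇑B = Sum.elim L I)
    (hf : IsBiderivation (fun x y => f x y)) {z : W}
    (hLz : ∀ m s, B.repr (f (L m) z) (.inl s) = 0) (hz : B.repr (f (I 0) z) (.inr 0) = 0)
    (n : ℤ) : f (I n) z = 0 := by
  refine B.repr.injective (Finsupp.ext fun i => ?_)
  rcases i with s | s
  · simpa using hW.repr_biderivation_I_inl_eq_zero hB hf n z s
  · rcases eq_or_ne s n with rfl | hsn
    · simpa [hz] using hW.repr_derivation_I_inr_self hB (hf.leftDerivation z) hLz s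
    · simpa using hW.repr_derivation_I_inr_of_ne hB (hf.leftDerivation z) hLz hsn

theorem biderivation_I_L_eq_zero (hW : IsWab 0 2 W L I) (hB : ⇑B = Sum.elim L I)
    (hf : IsBiderivation (fun x y => f x y)) (hsymm : ∀ x y, f x y = f y x) (n p : ℤ) :
    f (I n) (L p) = 0 := by
  have hLL m k s : B.repr (f (L m) (L k)) (.inl s) = 0 := by
    simp [hW.biderivation_L_L_eq_zero hB hf hsymm]
  refine hW.biderivation_I_eq_zero hB hf (hLL · p) ?_ n
  have hoff (k : ℤ) {j : ℤ} (hj : j ≠ 0) : B.repr (f (L k) (I 0)) (.inr j) = 0 := by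
    simpa [hsymm (L k)] using
      hW.repr_derivation_I_inr_of_ne hB (hf.leftDerivation (L k)) (hLL · k) hj
  obtain ⟨m, hm0, hmp⟩ : ∃ m : ℤ, 0 < m ∧ p < m := ⟨p.natAbs + 1, by omega, by omega⟩
  have e := hW.repr_derivation_L_inr hB (hf.leftDerivation (I 0)) m p m
  simp only [IsBiderivation.leftDerivation_apply, sub_self, hoff (m + p) hm0.ne',
    hoff m (sub_ne_zero.mpr hmp.ne'), mul_zero, add_zero] at e
  have key : (2 * m : ℂ) * B.repr (f (L p) (I 0)) (.inr 0) = 0 := by linear_combination e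
  rw [hsymm]
  exact (mul_eq_zero.mp key).resolve_left (by simpa using hm0.ne')

theorem biderivation_I_I_eq_zero (hW : IsWab 0 2 W L I) (hB : ⇑B = Sum.elim L I)
    (hf : IsBiderivation (fun x y => f x y)) (hsymm : ∀ x y, f x y = f y x) (n p : ℤ) :
    f (I n) (I p) = 0 := by
  have hLI m k s : B.repr (f (L m) (I k)) (.inl s) = 0 := by
    rw [hsymm]
    exact hW.repr_biderivation_I_inl_eq_zero hB hf k _ s
  refine hW.biderivation_I_eq_zero hB hf (hLI · p) ?_ n
  obtain ⟨q, hqp⟩ : ∃ q : ℤ, q ≠ p := ⟨p + 1, by omega⟩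
  calc B.repr (f (I 0) (I p)) (.inr 0)
      = B.repr (f (I q) (I p)) (.inr q) :=
        (hW.repr_derivation_I_inr_self hB (hf.leftDerivation (I p)) (hLI · p) q).symm
    _ = B.repr (f (I p) (I q)) (.inr q) := by rw [hsymm]
    _ = 0 := hW.repr_derivation_I_inr_of_ne hB (hf.leftDerivation (I q)) (hLI · q) hqp

end IsWab

/-- Every symmetric biderivation of `W(0,2)` is identically zero. -/
theorem symmetric_biderivation_W02_zero {W : Type*} [LieRing W] [LieAlgebra ℂ W]
    (L I : ℤ → W) (hW : IsWab 0 2 W L I) (f : W →ₗ[ℂ] W →ₗ[ℂ] W)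
    (hf : IsBiderivation (fun x y => f x y)) (hsymm : ∀ x y : W, f x y = f y x) :
    ∀ x y : W, f x y = 0 := by
  obtain ⟨B, hBL, hBI⟩ := hW.basis
  have hB : ⇑B = Sum.elim L I := funext fun i => by cases i <;> simp [hBL, hBI]
  have hf0 : f = 0 := by
    refine B.ext fun i => B.ext fun j => ?_
    rcases i with n | n <;> rcases j with p | p <;>
      simp [hB, hW.biderivation_L_L_eq_zero hB hf hsymm, hW.biderivation_I_L_eq_zero hB hf hsymm,
        hW.biderivation_I_I_eq_zero hB hf hsymm, hsymm (L _) (I _)]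
  simp [hf0]
end

section
/- Every commutative post-Lie algebra structure ∘ on W(a,b) (for any a,b ∈ ℂ) is trivial: x ∘ y = 0 for all x,y ∈ W(a,b). -/
/-!
The product `φ(x, y) = x ∘ y` of a commutative post-Lie structure is a symmetric biderivation.
Reading the biderivation identities off in the basis, with `ad L₀` acting as a grading operator,
shows first that all products lie in the abelian ideal spanned by the `I n` (modulo that ideal
`φ` induces a symmetric biderivation of the Witt algebra, and these vanish), and then that every
product with an `I n` vanishes. The post-Lie identity `[x, y] ∘ z = x ∘ (y ∘ z) - y ∘ (x ∘ z)`
then gives `[x, y] ∘ z = 0`, and every `L m` is a multiple of a commutator `[L p, L q]`.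
-/

open Submodule Set

theorem eq_zero_of_intCast_sub_mul_eq_zero {R : Type*} [Ring R] [NoZeroDivisors R] [CharZero R]
    {m n : ℤ} {x : R} (h : ((m : R) - n) * x = 0) (hmn : m ≠ n) : x = 0 :=
  (mul_eq_zero.mp h).resolve_left (sub_ne_zero.2 (Int.cast_injective.ne hmn))

theorem Int.exists_ne_ne_zero_add_eq (j : ℤ) : ∃ m n : ℤ, m ≠ n ∧ m ≠ 0 ∧ n ≠ 0 ∧ m + n = j := by
  rcases eq_or_ne j (-1) with rfl | h1
  · exact ⟨1, -2, by decide, by decide, by decide, rfl⟩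
  rcases eq_or_ne j (-2) with rfl | h2
  · exact ⟨1, -3, by decide, by decide, by decide, rfl⟩
  exact ⟨j + 1, -1, by omega, by omega, by omega, by omega⟩

/-- `e m j` is the `L j`-coefficient of `D (L m)` for a derivation `D` of the Witt algebra
`[L m, L n] = (m - n) L (m + n)`. -/
def IsWittDerivationMatrix (e : ℤ → ℤ → ℂ) : Prop :=
  ∀ m n j : ℤ, ((m : ℂ) - n) * e (m + n) j = (2 * m - j) * e n (j - m) - (2 * n - j) * e m (j - n)

namespace IsWittDerivationMatrix

variable {e : ℤ → ℤ → ℂ}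

theorem neg_mul_apply (he : IsWittDerivationMatrix e) {m s j : ℤ} (hj : m + s = j) :
    -(s : ℂ) * e m j = (m - s) * e 0 s := by
  subst hj
  have h := he m 0 (m + s)
  simp only [add_zero, sub_zero, Int.cast_zero, mul_zero, add_sub_cancel_left] at h
  push_cast at h
  linear_combination h

theorem apply_of_ne (he : IsWittDerivationMatrix e) (h0 : ∀ t, e 0 t = 0) {m j : ℤ}
    (hmj : m ≠ j) : e m j = 0 := by
  have h := he.neg_mul_apply (add_sub_cancel m j)
  rw [h0, mul_zero, neg_mul, neg_eq_zero] at h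
  exact (mul_eq_zero.mp h).resolve_left (Int.cast_ne_zero.2 (sub_ne_zero.2 hmj.symm))

theorem eq_zero_of_diag (he : IsWittDerivationMatrix e) (h0 : ∀ t, e 0 t = 0) (w : ℂ)
    (hdiag : ∀ m : ℤ, (m : ℂ) ≠ w → e m m = 0) (m j : ℤ) : e m j = 0 := by
  rcases ne_or_eq m j with hmj | rfl
  · exact he.apply_of_ne h0 hmj
  by_cases hmw : (m : ℂ) = w
  swap
  · exact hdiag m hmw
  obtain ⟨p, q, hpq, hp, hq, rfl⟩ := Int.exists_ne_ne_zero_add_eq m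
  have hpw : (p : ℂ) ≠ w := by rw [← hmw]; exact_mod_cast (by omega : p ≠ p + q)
  have hqw : (q : ℂ) ≠ w := by rw [← hmw]; exact_mod_cast (by omega : q ≠ p + q)
  have h := he p q (p + q)
  rw [show p + q - p = q by ring, show p + q - q = p by ring, hdiag p hpw, hdiag q hqw] at h
  exact eq_zero_of_intCast_sub_mul_eq_zero (by linear_combination h) hpq

theorem eq_zero_of_sub_mul_eq_zero (he : IsWittDerivationMatrix e) (w : ℂ)
    (hw : ∀ m j : ℤ, ((j : ℂ) - w) * e m j = 0) (m j : ℤ) : e m j = 0 := by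
  have h0 : ∀ t, e 0 t = 0 := by
    intro t
    obtain ⟨p, hp, hpt⟩ : ∃ p : ℤ, p ≠ 0 ∧ p ≠ t :=
      ⟨if t = 1 then 2 else 1, by split_ifs <;> omega, by split_ifs <;> omega⟩
    have h := he.neg_mul_apply (add_comm p t)
    have hX := hw p (t + p)
    push_cast at h hX
    have key : ((p : ℂ) - t) * (p * e 0 t) = 0 := by
      linear_combination -(↑t + ↑p - w) * h - (t : ℂ) * hX - (p - t) * hw 0 t
    exact (mul_eq_zero.mp (eq_zero_of_intCast_sub_mul_eq_zero key hpt)).resolve_left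
      (Int.cast_ne_zero.2 hp)
  refine he.eq_zero_of_diag h0 w (fun m hm => ?_) m j
  exact (mul_eq_zero.mp (hw m m)).resolve_left (sub_ne_zero.2 hm)

end IsWittDerivationMatrix

/-- `c m k j` is the `L j`-coefficient of `ψ (L m) (L k)` for a symmetric biderivation `ψ` of
the Witt algebra. -/
structure IsWittSymmBiderivation (c : ℤ → ℤ → ℤ → ℂ) : Prop where
  symm : ∀ m k, c m k = c k m
  isWittDerivationMatrix : ∀ k, IsWittDerivationMatrix fun m j => c m k j

namespace IsWittSymmBiderivation

variable {c : ℤ → ℤ → ℤ → ℂ}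

theorem apply_zero_zero (hc : IsWittSymmBiderivation c) (t : ℤ) : c 0 0 t = 0 := by
  have e1 := (hc.isWittDerivationMatrix 2).neg_mul_apply (m := 1) (s := 2 + t) (j := 3 + t)
    (by ring)
  have e2 := (hc.isWittDerivationMatrix 1).neg_mul_apply (m := 2) (s := 1 + t) (j := 3 + t)
    (by ring)
  have e3 := (hc.isWittDerivationMatrix 0).neg_mul_apply (m := 2) (s := t) rfl
  have e4 := (hc.isWittDerivationMatrix 0).neg_mul_apply (m := 1) (s := t) rfl
  rw [hc.symm 1 2, hc.symm 0 2] at e1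
  rw [hc.symm 0 1] at e2
  push_cast at e1 e2 e3 e4
  -- eliminating `c 1 2 (3 + t)`, `c 0 2 (2 + t)` and `c 0 1 (1 + t)` leaves `4 * c 0 0 t = 0`
  linear_combination (1 / 4 : ℂ) * (-(1 + t) * t * e1 + (2 + t) * t * e2 - (1 + t) ^ 2 * e3
    - (2 + t) * (1 - t) * e4)

theorem apply_zero (hc : IsWittSymmBiderivation c) (k j : ℤ) : c 0 k j = 0 := by
  rcases ne_or_eq k j with hkj | rfl
  · rw [hc.symm]
    exact (hc.isWittDerivationMatrix 0).apply_of_ne hc.apply_zero_zero hkj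
  have hrel : ∀ m k : ℤ, m ≠ k → (m : ℂ) * c 0 k k + k * c 0 m m = 0 := by
    intro m k hmk
    have e1 := (hc.isWittDerivationMatrix k).neg_mul_apply (m := m) (s := k) rfl
    have e2 := (hc.isWittDerivationMatrix m).neg_mul_apply (m := k) (s := m) (add_comm k m)
    rw [hc.symm k m] at e2
    exact eq_zero_of_intCast_sub_mul_eq_zero (by linear_combination -(m * e1) + k * e2) hmk
  have h1 : c 0 1 1 = 0 := by
    have h12 := hrel 1 2 (by decide)
    have h13 := hrel 1 3 (by decide)
    have h23 := hrel 2 3 (by decide)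
    push_cast at h12 h13 h23
    linear_combination (3 * h12 + 2 * h13 - h23) / 12
  rcases eq_or_ne k 1 with rfl | hk1
  · exact h1
  simpa [h1] using hrel k 1 hk1

theorem eq_zero (hc : IsWittSymmBiderivation c) (m k j : ℤ) : c m k j = 0 := by
  refine (hc.isWittDerivationMatrix k).eq_zero_of_diag (hc.apply_zero k) k (fun m hmk => ?_) m j
  rw [hc.symm]
  exact (hc.isWittDerivationMatrix m).apply_of_ne (hc.apply_zero m) fun h => hmk (by rw [h])

end IsWittSymmBiderivation

structure IsSymmBiderivation {R L : Type*} [CommSemiring R] [LieRing L] [Module R L]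
    (φ : L →ₗ[R] L →ₗ[R] L) : Prop where
  symm : ∀ x y, φ x y = φ y x
  leibniz_right : ∀ x y z, φ x ⁅y, z⁆ = ⁅φ x y, z⁆ + ⁅y, φ x z⁆

theorem IsSymmBiderivation.leibniz_left {R L : Type*} [CommSemiring R] [LieRing L] [Module R L]
    {φ : L →ₗ[R] L →ₗ[R] L} (hφ : IsSymmBiderivation φ) (x y z : L) :
    φ ⁅x, y⁆ z = ⁅x, φ y z⁆ - ⁅y, φ x z⁆ := by
  rw [hφ.symm, hφ.leibniz_right, hφ.symm z x, hφ.symm z y, ← lie_skew (φ x z) y]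
  abel

namespace IsWab

variable {a b : ℂ} {W : Type*} [LieRing W] [LieAlgebra ℂ W] {L I : ℤ → W}

noncomputable def stdBasis (hW : IsWab a b W L I) : Module.Basis (ℤ ⊕ ℤ) ℂ W :=
  hW.basis.choose

theorem stdBasis_inl (hW : IsWab a b W L I) (m : ℤ) : hW.stdBasis (.inl m) = L m :=
  hW.basis.choose_spec.1 m

theorem stdBasis_inr (hW : IsWab a b W L I) (m : ℤ) : hW.stdBasis (.inr m) = I m :=
  hW.basis.choose_spec.2 m

noncomputable def coordL (hW : IsWab a b W L I) (j : ℤ) : W →ₗ[ℂ] ℂ :=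
  hW.stdBasis.coord (.inl j)

noncomputable def coordI (hW : IsWab a b W L I) (j : ℤ) : W →ₗ[ℂ] ℂ :=
  hW.stdBasis.coord (.inr j)

theorem coordL_L (hW : IsWab a b W L I) (j t : ℤ) :
    hW.coordL j (L t) = if t = j then 1 else 0 := by
  simp [coordL, ← hW.stdBasis_inl, Finsupp.single_apply]

theorem coordL_I (hW : IsWab a b W L I) (j t : ℤ) : hW.coordL j (I t) = 0 := by
  simp [coordL, ← hW.stdBasis_inr]

theorem coordI_L (hW : IsWab a b W L I) (j t : ℤ) : hW.coordI j (L t) = 0 := by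
  simp [coordI, ← hW.stdBasis_inl]

theorem coordI_I (hW : IsWab a b W L I) (j t : ℤ) :
    hW.coordI j (I t) = if t = j then 1 else 0 := by
  simp [coordI, ← hW.stdBasis_inr, Finsupp.single_apply]

theorem linearMap_ext {M : Type*} [AddCommMonoid M] [Module ℂ M] (hW : IsWab a b W L I)
    {f g : W →ₗ[ℂ] M} (hL : ∀ m, f (L m) = g (L m)) (hI : ∀ n, f (I n) = g (I n)) : f = g :=
  hW.stdBasis.ext fun
    | .inl m => by rw [hW.stdBasis_inl, hL]
    | .inr n => by rw [hW.stdBasis_inr, hI]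

theorem mem_span_range_I_iff (hW : IsWab a b W L I) {x : W} :
    x ∈ span ℂ (range I) ↔ ∀ j, hW.coordL j x = 0 := by
  have hI : range I = hW.stdBasis '' range Sum.inr := by
    rw [← range_comp]; exact congrArg range (funext fun n => (hW.stdBasis_inr n).symm)
  rw [hI, Module.Basis.mem_span_image]
  constructor
  · intro h j
    by_contra hj
    simpa using h (Finsupp.mem_support_iff.2 hj)
  · rintro h (j | j) hj
    · exact absurd (h j) (Finsupp.mem_support_iff.1 hj)
    · exact ⟨j, rfl⟩

theorem eq_zero_of_mem_span_of_coordI (hW : IsWab a b W L I) {x : W}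
    (hx : x ∈ span ℂ (range I)) (hI : ∀ j, hW.coordI j x = 0) : x = 0 :=
  hW.stdBasis.ext_elem_iff.2 fun
    | .inl j => by simpa [coordL] using hW.mem_span_range_I_iff.1 hx j
    | .inr j => by simpa [coordI] using hI j

theorem lie_I_eq_zero_of_mem_span (hW : IsWab a b W L I) (n : ℤ) {w : W}
    (hw : w ∈ span ℂ (range I)) : ⁅I n, w⁆ = 0 := by
  have hle : span ℂ (range I) ≤ LinearMap.ker (LieAlgebra.ad ℂ W (I n)) :=
    span_le.2 (range_subset_iff.2 fun k => by simp [hW.bracket_II])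
  simpa using hle hw

theorem coordL_lie_L (hW : IsWab a b W L I) (m j : ℤ) (x : W) :
    hW.coordL j ⁅L m, x⁆ = (2 * m - j) * hW.coordL (j - m) x := by
  have h : hW.coordL j ∘ₗ LieAlgebra.ad ℂ W (L m) = (2 * m - j : ℂ) • hW.coordL (j - m) := by
    refine hW.linearMap_ext (fun t => ?_) (fun t => ?_)
    · simp only [LinearMap.comp_apply, LieAlgebra.ad_apply, LinearMap.smul_apply, hW.bracket_LL,
        map_smul, hW.coordL_L, smul_eq_mul]
      split_ifs with h1 h2 h2
      all_goals first | (exfalso; omega) | simp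
      subst h2; push_cast; ring
    · simp [hW.bracket_LI, hW.coordL_I]
  simpa using LinearMap.congr_fun h x

theorem coordI_lie_L (hW : IsWab a b W L I) (m j : ℤ) (x : W) :
    hW.coordI j ⁅L m, x⁆ = -((j - m) + a + b * m) * hW.coordI (j - m) x := by
  have h : hW.coordI j ∘ₗ LieAlgebra.ad ℂ W (L m) =
      (-((j - m) + a + b * m) : ℂ) • hW.coordI (j - m) := by
    refine hW.linearMap_ext (fun t => ?_) (fun t => ?_)
    · simp [hW.bracket_LL, hW.coordI_L]
    · simp only [LinearMap.comp_apply, LieAlgebra.ad_apply, LinearMap.smul_apply, hW.bracket_LI,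
        map_smul, hW.coordI_I, smul_eq_mul]
      split_ifs with h1 h2 h2
      all_goals first | (exfalso; omega) | simp
      subst h2; push_cast; ring
  simpa using LinearMap.congr_fun h x

theorem coordL_lie_I (hW : IsWab a b W L I) (m j : ℤ) (x : W) : hW.coordL j ⁅I m, x⁆ = 0 := by
  have h : hW.coordL j ∘ₗ LieAlgebra.ad ℂ W (I m) = 0 := by
    refine hW.linearMap_ext (fun t => ?_) (fun t => ?_)
    · simp [← lie_skew (I m), hW.bracket_LI, hW.coordL_I]
    · simp [hW.bracket_II]
  simpa using LinearMap.congr_fun h x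

end IsWab

namespace IsSymmBiderivation

variable {a b : ℂ} {W : Type*} [LieRing W] [LieAlgebra ℂ W] {L I : ℤ → W}
  {φ : W →ₗ[ℂ] W →ₗ[ℂ] W}

theorem smul_apply_L_add (hφ : IsSymmBiderivation φ) (hW : IsWab a b W L I) (m n : ℤ) (z : W) :
    ((m - n : ℤ) : ℂ) • φ (L (m + n)) z = ⁅L m, φ (L n) z⁆ - ⁅L n, φ (L m) z⁆ := by
  rw [← LinearMap.smul_apply, ← map_smul, ← hW.bracket_LL, hφ.leibniz_left]

theorem smul_apply_I_add (hφ : IsSymmBiderivation φ) (hW : IsWab a b W L I) (m n : ℤ) (z : W) :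
    (-((n : ℂ) + a + b * m)) • φ (I (m + n)) z = ⁅L m, φ (I n) z⁆ - ⁅I n, φ (L m) z⁆ := by
  rw [← LinearMap.smul_apply, ← map_smul, ← hW.bracket_LI, hφ.leibniz_left]

theorem isWittDerivationMatrix_coordL_apply_L (hφ : IsSymmBiderivation φ)
    (hW : IsWab a b W L I) (z : W) :
    IsWittDerivationMatrix fun m j => hW.coordL j (φ (L m) z) := by
  intro m n j
  have h := congrArg (hW.coordL j) (hφ.smul_apply_L_add hW m n z)
  rw [map_smul, map_sub, hW.coordL_lie_L, hW.coordL_lie_L, smul_eq_mul] at h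
  push_cast at h
  exact h

theorem sub_mul_coordL_apply_I (hφ : IsSymmBiderivation φ) (hW : IsWab a b W L I)
    (n j : ℤ) (z : W) : ((j : ℂ) - (n + a)) * hW.coordL j (φ (I n) z) = 0 := by
  have h := congrArg (hW.coordL j) (hφ.smul_apply_I_add hW 0 n z)
  simp only [zero_add, map_smul, map_sub, smul_eq_mul, hW.coordL_lie_L, hW.coordL_lie_I,
    sub_zero, Int.cast_zero, mul_zero, add_zero] at h
  linear_combination h

theorem coordL_apply_I_I (hφ : IsSymmBiderivation φ) (hW : IsWab a b W L I) (n k j : ℤ) :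
    hW.coordL j (φ (I n) (I k)) = 0 := by
  have hne : ∀ n k j, n ≠ k → hW.coordL j (φ (I n) (I k)) = 0 := fun n k j hnk => by
    have h := hφ.sub_mul_coordL_apply_I hW k j (I n)
    rw [hφ.symm] at h
    exact eq_zero_of_intCast_sub_mul_eq_zero
      (by linear_combination hφ.sub_mul_coordL_apply_I hW n j (I k) - h) hnk.symm
  rcases ne_or_eq n k with hnk | rfl
  · exact hne n k j hnk
  obtain ⟨m, hm, hmj⟩ : ∃ m : ℤ, m ≠ 0 ∧ m ≠ j :=
    ⟨if j = 1 then 2 else 1, by split_ifs <;> omega, by split_ifs <;> omega⟩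
  have h := congrArg (hW.coordL (j + m)) (hφ.smul_apply_I_add hW m n (I n))
  simp only [map_smul, map_sub, smul_eq_mul, hW.coordL_lie_L, hW.coordL_lie_I, sub_zero,
    add_sub_cancel_right, hne (m + n) n (j + m) (by omega), mul_zero] at h
  push_cast at h
  exact eq_zero_of_intCast_sub_mul_eq_zero (by linear_combination -h) hmj

theorem coordL_apply_L_I (hφ : IsSymmBiderivation φ) (hW : IsWab a b W L I) (m n j : ℤ) :
    hW.coordL j (φ (L m) (I n)) = 0 :=
  (hφ.isWittDerivationMatrix_coordL_apply_L hW (I n)).eq_zero_of_sub_mul_eq_zero (n + a)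
    (fun m j => by rw [hφ.symm]; exact hφ.sub_mul_coordL_apply_I hW n j (L m)) m j

theorem coordL_apply_L_L (hφ : IsSymmBiderivation φ) (hW : IsWab a b W L I) (m k j : ℤ) :
    hW.coordL j (φ (L m) (L k)) = 0 :=
  IsWittSymmBiderivation.eq_zero (c := fun m k j => hW.coordL j (φ (L m) (L k)))
    ⟨fun m k => funext fun j => by rw [hφ.symm],
      fun k => hφ.isWittDerivationMatrix_coordL_apply_L hW (L k)⟩ m k j

theorem apply_mem_span (hφ : IsSymmBiderivation φ) (hW : IsWab a b W L I) (x y : W) :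
    φ x y ∈ span ℂ (range I) := by
  refine hW.mem_span_range_I_iff.2 fun j => ?_
  have h : φ.compr₂ (hW.coordL j) = 0 := by
    refine LinearMap.ext_basis hW.stdBasis hW.stdBasis fun
      | .inl m, .inl k => ?_
      | .inl m, .inr n => ?_
      | .inr n, .inl m => ?_
      | .inr n, .inr k => ?_
    all_goals simp only [LinearMap.compr₂_apply, LinearMap.zero_apply, hW.stdBasis_inl,
      hW.stdBasis_inr]
    · exact hφ.coordL_apply_L_L hW m k j
    · exact hφ.coordL_apply_L_I hW m n j
    · rw [hφ.symm]; exact hφ.coordL_apply_L_I hW m n j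
    · exact hφ.coordL_apply_I_I hW n k j
  simpa using LinearMap.congr_fun₂ h x y

theorem coordI_apply_I_of_ne (hφ : IsSymmBiderivation φ) (hW : IsWab a b W L I) {n j : ℤ}
    (hjn : j ≠ n) (z : W) : hW.coordI j (φ (I n) z) = 0 := by
  have h := hφ.smul_apply_I_add hW 0 n z
  rw [hW.lie_I_eq_zero_of_mem_span n (hφ.apply_mem_span hW _ _), sub_zero, zero_add] at h
  have h' := congrArg (hW.coordI j) h
  simp only [map_smul, smul_eq_mul, hW.coordI_lie_L, sub_zero, Int.cast_zero, mul_zero,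
    add_zero] at h'
  exact eq_zero_of_intCast_sub_mul_eq_zero (by linear_combination h') hjn

theorem apply_I_I_of_ne (hφ : IsSymmBiderivation φ) (hW : IsWab a b W L I) {n k : ℤ}
    (hnk : n ≠ k) : φ (I n) (I k) = 0 := by
  refine hW.eq_zero_of_mem_span_of_coordI (hφ.apply_mem_span hW _ _) fun j => ?_
  rcases ne_or_eq j n with hjn | rfl
  · exact hφ.coordI_apply_I_of_ne hW hjn _
  · rw [hφ.symm]; exact hφ.coordI_apply_I_of_ne hW hnk _

theorem apply_L_I (hφ : IsSymmBiderivation φ) (hW : IsWab a b W L I) (k n : ℤ) :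
    φ (L k) (I n) = 0 := by
  refine hW.eq_zero_of_mem_span_of_coordI (hφ.apply_mem_span hW _ _) fun j => ?_
  rcases ne_or_eq j n with hjn | rfl
  · rw [hφ.symm]; exact hφ.coordI_apply_I_of_ne hW hjn _
  obtain ⟨p, q, hpq, hp, hq, rfl⟩ := Int.exists_ne_ne_zero_add_eq k
  have h := congrArg (hW.coordI j) (hφ.smul_apply_L_add hW p q (I j))
  rw [map_smul, map_sub, hW.coordI_lie_L, hW.coordI_lie_L, hφ.symm (L q), hφ.symm (L p),
    hφ.coordI_apply_I_of_ne hW (by omega : j - p ≠ j),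
    hφ.coordI_apply_I_of_ne hW (by omega : j - q ≠ j), smul_eq_mul] at h
  push_cast at h
  exact eq_zero_of_intCast_sub_mul_eq_zero (by linear_combination h) hpq

theorem apply_I_self (hφ : IsSymmBiderivation φ) (hW : IsWab a b W L I) (n : ℤ) :
    φ (I n) (I n) = 0 := by
  refine hW.eq_zero_of_mem_span_of_coordI (hφ.apply_mem_span hW _ _) fun j => ?_
  rcases ne_or_eq j n with hjn | rfl
  · exact hφ.coordI_apply_I_of_ne hW hjn _
  have h1 := congrArg (hW.coordI (1 + j)) (hφ.smul_apply_I_add hW 1 j (I j))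
  rw [hφ.apply_I_I_of_ne hW (by omega : 1 + j ≠ j), hφ.apply_L_I hW, lie_zero, sub_zero,
    smul_zero, map_zero, hW.coordI_lie_L, add_sub_cancel_left] at h1
  have h2 := hφ.smul_apply_I_add hW 1 (j - 1) (I j)
  rw [add_sub_cancel, hφ.apply_I_I_of_ne hW (by omega : j - 1 ≠ j), hφ.apply_L_I hW, lie_zero,
    lie_zero, sub_zero] at h2
  have h2' := congrArg (hW.coordI j) h2
  rw [map_smul, map_zero, smul_eq_mul] at h2'
  -- the coefficients `j + a + b` and `j - 1 + a + b` cannot both vanish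
  push_cast at h1 h2'
  linear_combination h2' + h1

theorem apply_I (hφ : IsSymmBiderivation φ) (hW : IsWab a b W L I) (x : W) (n : ℤ) :
    φ x (I n) = 0 := by
  have h : φ.flip (I n) = 0 := hW.linearMap_ext (fun k => hφ.apply_L_I hW k n) fun k => by
    rcases eq_or_ne k n with rfl | hkn
    · exact hφ.apply_I_self hW k
    · exact hφ.apply_I_I_of_ne hW hkn
  simpa using LinearMap.congr_fun h x

theorem apply_eq_zero_of_mem_span (hφ : IsSymmBiderivation φ) (hW : IsWab a b W L I) (x : W)
    {w : W} (hw : w ∈ span ℂ (range I)) : φ x w = 0 :=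
  LinearMap.mem_ker.1 <|
    span_le.2 (range_subset_iff.2 fun n => LinearMap.mem_ker.2 (hφ.apply_I hW x n)) hw

end IsSymmBiderivation

/-- Every commutative post-Lie algebra structure on `W(a,b)` is trivial. -/
theorem commPostLie_Wab_trivial (a b : ℂ) {W : Type*} [LieRing W] [LieAlgebra ℂ W]
    (L I : ℤ → W) (hW : IsWab a b W L I) (mul : W →ₗ[ℂ] W →ₗ[ℂ] W)
    (hcomm : ∀ x y : W, mul x y = mul y x)
    (hpost1 : ∀ x y z : W, mul ⁅x, y⁆ z = mul x (mul y z) - mul y (mul x z))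
    (hpost2 : ∀ x y z : W, mul x ⁅y, z⁆ = ⁅mul x y, z⁆ + ⁅y, mul x z⁆) :
    ∀ x y : W, mul x y = 0 := by
  have hφ : IsSymmBiderivation mul := ⟨hcomm, hpost2⟩
  have hlie : ∀ x y z, mul ⁅x, y⁆ z = 0 := fun x y z => by
    rw [hpost1, hφ.apply_eq_zero_of_mem_span hW x (hφ.apply_mem_span hW y z),
      hφ.apply_eq_zero_of_mem_span hW y (hφ.apply_mem_span hW x z), sub_zero]
  have hL : ∀ m z, mul (L m) z = 0 := fun m z => by
    obtain ⟨p, q, hpq, -, -, rfl⟩ := Int.exists_ne_ne_zero_add_eq m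
    have h := hlie (L p) (L q) z
    rw [hW.bracket_LL, map_smul, LinearMap.smul_apply, smul_eq_zero] at h
    exact h.resolve_left (Int.cast_ne_zero.2 (sub_ne_zero.2 hpq))
  have hmul : mul = 0 := hW.linearMap_ext (fun m => LinearMap.ext (hL m))
    fun n => LinearMap.ext fun z => by rw [hcomm]; exact hφ.apply_I hW z n
  simp [hmul]
end
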